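/- Let E be an ordered Banach space whose positive cone E₊ has nonempty interior, let F be an order complete Banach lattice, and let Φ : E₊ → F be a continuous convex function. Then Φ is isotone on int E₊ (x ≤ y in int E₊ implies Φ(x) ≤ Φ(y)) if and only if for every x₀ ∈ int E₊ the subdifferential ∂_{x₀}Φ contains a positive linear operator, i.e., there exists a positive continuous linear operator T : E → F with Φ(x) ≥ Φ(x₀) + T(x - x₀) for all x ∈ E₊. -/

import Mathlib

/-!
At `x₀ ∈ int E₊` the one-sided directional derivative `P v = inf_{t > 0} t⁻¹ (Φ (x₀ + t v) - Φ x₀)`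
exists: by convexity the quotients in direction `v` are bounded below by minus those in direction
`-v`, and `F` is order complete. Convexity also makes `P` sublinear, so the
Hahn–Banach–Kantorovich theorem (Zorn's lemma, with order completeness of `F` supplying the value
on each new direction) gives a linear `T ≤ P`, which is a subgradient of `Φ` at `x₀`. For small `h`
it satisfies `-(Φ (x₀ - h) - Φ x₀) ≤ T h ≤ Φ (x₀ + h) - Φ x₀`, so it is continuous by solidity of
the norm and continuity of `Φ`; if `Φ` is isotone, `T (-t x) ≤ Φ (x₀ - t x) - Φ x₀ ≤ 0` for
`x ≥ 0` and small `t > 0`, so `T` is positive. Conversely a positive subgradient `T` at `x` gives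
`Φ x ≤ Φ x + T (y - x) ≤ Φ y`.
-/

open Set Filter Topology Submodule
open scoped Pointwise

theorem exists_isGLB_of_exists_isLUB {F : Type*} [AddCommGroup F] [PartialOrder F]
    [IsOrderedAddMonoid F] (hF : ∀ S : Set F, S.Nonempty → BddAbove S → ∃ b, IsLUB S b)
    {S : Set F} (hne : S.Nonempty) (hbdd : BddBelow S) : ∃ b, IsGLB S b := by
  obtain ⟨b, hb⟩ := hF (-S) hne.neg hbdd.neg
  exact ⟨-b, isLUB_neg.1 hb⟩

section HahnBanachKantorovich

variable {E F : Type*} [AddCommGroup E] [Module ℝ E]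
  [AddCommGroup F] [PartialOrder F] [IsOrderedAddMonoid F] [Module ℝ F]

theorem LinearPMap.exists_forall_sub_le_and_add_le
    (hF : ∀ S : Set F, S.Nonempty → BddAbove S → ∃ b, IsLUB S b) {p : E → F}
    (hp_add : ∀ x y, p (x + y) ≤ p x + p y) (f : E →ₗ.[ℝ] F) (hf : ∀ x : f.domain, f x ≤ p x)
    (y : E) : ∃ α : F,
      (∀ x : f.domain, f x - α ≤ p (x - y)) ∧ ∀ x : f.domain, f x + α ≤ p (x + y) := by
  have hsep : ∀ x x' : f.domain, f x - p (x - y) ≤ p (x' + y) - f x' := by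
    intro x x'
    rw [sub_le_sub_iff, ← map_add]
    calc
      f (x + x') ≤ p ((x' + y) + (x - y)) := by
        convert hf (x + x') using 2
        push_cast
        abel
      _ ≤ p (x' + y) + p (x - y) := hp_add _ _
  obtain ⟨α, hα⟩ := hF (range fun x : f.domain => f x - p (x - y)) (range_nonempty _)
    ⟨_, forall_mem_range.2 fun x => hsep x 0⟩
  exact ⟨α, fun x => sub_le_comm.1 (hα.1 (mem_range_self x)),
    fun x' => le_sub_iff_add_le'.1 (hα.2 (forall_mem_range.2 fun x => hsep x x'))⟩

variable [PosSMulMono ℝ F]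

theorem LinearPMap.exists_gt_le_sublinear
    (hF : ∀ S : Set F, S.Nonempty → BddAbove S → ∃ b, IsLUB S b) {p : E → F}
    (hp_add : ∀ x y, p (x + y) ≤ p x + p y) (hp_smul : ∀ c : ℝ, 0 < c → ∀ x, p (c • x) = c • p x)
    (f : E →ₗ.[ℝ] F) (hf : ∀ x : f.domain, f x ≤ p x) (hdom : f.domain ≠ ⊤) :
    ∃ g : E →ₗ.[ℝ] F, f < g ∧ ∀ x : g.domain, g x ≤ p x := by
  obtain ⟨y, -, hy⟩ : ∃ y ∈ (⊤ : Submodule ℝ E), y ∉ f.domain :=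
    SetLike.exists_of_lt (lt_top_iff_ne_top.2 hdom)
  obtain ⟨α, hα_sub, hα_add⟩ := f.exists_forall_sub_le_and_add_le hF hp_add hf y
  -- `p` is positively homogeneous, so the bound only has to be checked on the rays through `±y`.
  have hscale : ∀ {c : ℝ} {a : F} {u : E}, 0 < c → c⁻¹ • a ≤ p (c⁻¹ • u) → a ≤ p u := by
    intro c a u hc h
    have := smul_le_smul_of_nonneg_left h hc.le
    rwa [smul_inv_smul₀ hc.ne', ← hp_smul c hc, smul_inv_smul₀ hc.ne'] at this
  refine ⟨f.supSpanSingleton y α hy,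
    lt_of_le_not_ge (f.left_le_sup _ _) fun H => hy ?_, ?_⟩
  · have H := LinearPMap.domain_mono.monotone H
    rw [LinearPMap.domain_supSpanSingleton, sup_le_iff, span_le, singleton_subset_iff] at H
    exact H.2
  rintro ⟨z, hz⟩
  rw [LinearPMap.domain_supSpanSingleton] at hz
  obtain ⟨x, hx, _, hry, rfl⟩ := mem_sup.1 hz
  obtain ⟨r, rfl⟩ := mem_span_singleton.1 hry
  rw [LinearPMap.supSpanSingleton_apply_mk _ _ _ _ _ hx, RingHom.id_apply]
  rcases lt_trichotomy r 0 with hr | rfl | hr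
  · refine hscale (neg_pos.2 hr) ?_
    convert hα_sub ((-r)⁻¹ • ⟨x, hx⟩) using 1
    · rw [f.map_smul]
      simp [smul_add, smul_smul, hr.ne, sub_eq_add_neg]
    · simp [smul_add, smul_smul, hr.ne, sub_eq_add_neg]
  · simpa using hf ⟨x, hx⟩
  · refine hscale hr ?_
    convert hα_add (r⁻¹ • ⟨x, hx⟩) using 1
    · rw [f.map_smul]
      simp [smul_add, smul_smul, hr.ne']
    · simp [smul_add, smul_smul, hr.ne']

theorem exists_linearMap_le_sublinear
    (hF : ∀ S : Set F, S.Nonempty → BddAbove S → ∃ b, IsLUB S b) (p : E → F)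
    (hp_add : ∀ x y, p (x + y) ≤ p x + p y) (hp_smul : ∀ c : ℝ, 0 < c → ∀ x, p (c • x) = c • p x) :
    ∃ T : E →ₗ[ℝ] F, ∀ x, T x ≤ p x := by
  set S := {f : E →ₗ.[ℝ] F | ∀ x : f.domain, f x ≤ p x}
  have hchain : ∀ c ⊆ S, IsChain (· ≤ ·) c → ∀ f ∈ c, ∃ ub ∈ S, ∀ g ∈ c, g ≤ ub := by
    intro c hcS hc f hf
    have hcd : DirectedOn (· ≤ ·) c := hc.directedOn
    refine ⟨LinearPMap.sSup c hcd, ?_, fun _ => LinearPMap.le_sSup hcd⟩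
    rintro ⟨x, hx⟩
    have hdir : DirectedOn (· ≤ ·) (LinearPMap.domain '' c) :=
      directedOn_image.2 (hcd.mono LinearPMap.domain_mono.monotone)
    obtain ⟨_, ⟨g, hgc, rfl⟩, hgx⟩ := (mem_sSup_of_directed (Nonempty.image _ ⟨f, hf⟩) hdir).1 hx
    rw [← (LinearPMap.le_sSup hcd hgc).2 (x := ⟨x, hgx⟩) rfl]
    exact hcS hgc ⟨x, hgx⟩
  have hbot : (0 : E →ₗ[ℝ] F).toPMap ⊥ ∈ S := by
    rintro ⟨x, hx⟩
    obtain rfl : x = 0 := by simpa using hx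
    simpa using hp_add 0 0
  obtain ⟨q, -, hqS, hqmax⟩ := zorn_le_nonempty₀ S hchain _ hbot
  have hq : q.domain = ⊤ := by
    by_contra hdom
    obtain ⟨g, hqg, hg⟩ := q.exists_gt_le_sublinear hF hp_add hp_smul hqS hdom
    exact hqg.ne' (hqmax hg hqg.le |>.antisymm hqg.le)
  refine ⟨q.toFun ∘ₗ (LinearEquiv.ofTop _ hq).symm.toLinearMap, fun x => ?_⟩
  simpa using hqS ((LinearEquiv.ofTop _ hq).symm x)

end HahnBanachKantorovich

section RadialSlopes

variable {E F : Type*} [AddCommGroup E] [Module ℝ E]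
  [AddCommGroup F] [Module ℝ F]

/-- The infimum of `radialSlopes D g v` is the one-sided directional derivative of `g` at `0`. -/
def radialSlopes (D : Set E) (g : E → F) (v : E) : Set F :=
  (fun t : ℝ => t⁻¹ • g (t • v)) '' {t | 0 < t ∧ t • v ∈ D}

variable {D : Set E} {g : E → F}

theorem apply_mem_radialSlopes {u : E} (hu : u ∈ D) : g u ∈ radialSlopes D g u :=
  ⟨1, ⟨one_pos, by simpa using hu⟩, by simp⟩

theorem radialSlopes_smul {c : ℝ} (hc : 0 < c) (v : E) :
    radialSlopes D g (c • v) = c • radialSlopes D g v := by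
  ext a
  simp only [radialSlopes, mem_smul_set, mem_image, mem_ofPred_eq, smul_smul]
  constructor
  · rintro ⟨t, ⟨ht, htv⟩, rfl⟩
    refine ⟨_, ⟨t * c, ⟨by positivity, htv⟩, rfl⟩, ?_⟩
    rw [smul_smul]
    field_simp
  · rintro ⟨_, ⟨t, ⟨ht, htv⟩, rfl⟩, rfl⟩
    refine ⟨t / c, ⟨by positivity, by rwa [div_mul_cancel₀ t hc.ne']⟩, ?_⟩
    rw [div_mul_cancel₀ t hc.ne', smul_smul, inv_div, div_eq_mul_inv]

variable [PartialOrder F] [PosSMulMono ℝ F]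

/-- The point `(s t / (s + t)) • (v + w)` is a convex combination of `s • v` and `t • w`. -/
theorem ConvexOn.exists_mem_radialSlopes_add_le (hg : ConvexOn ℝ D g) {v w : E} {a b : F}
    (ha : a ∈ radialSlopes D g v) (hb : b ∈ radialSlopes D g w) :
    ∃ c ∈ radialSlopes D g (v + w), c ≤ a + b := by
  obtain ⟨s, ⟨hs, hsv⟩, rfl⟩ := ha
  obtain ⟨t, ⟨ht, htw⟩, rfl⟩ := hb
  set r := s * t / (s + t)
  have hr : 0 < r := by positivity
  have hweights : t / (s + t) + s / (s + t) = 1 := by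
    rw [← add_div, add_comm, div_self (by positivity)]
  have hcomb : (t / (s + t)) • (s • v) + (s / (s + t)) • (t • w) = r • (v + w) := by module
  refine ⟨r⁻¹ • g (r • (v + w)),
    ⟨r, ⟨hr, hcomb ▸ hg.1 hsv htw (by positivity) (by positivity) hweights⟩, rfl⟩, ?_⟩
  calc r⁻¹ • g (r • (v + w))
      ≤ r⁻¹ • ((t / (s + t)) • g (s • v) + (s / (s + t)) • g (t • w)) := by
        rw [← hcomb]
        exact smul_le_smul_of_nonneg_left (hg.2 hsv htw (by positivity) (by positivity) hweights)
          (inv_nonneg.2 hr.le)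
    _ = s⁻¹ • g (s • v) + t⁻¹ • g (t • w) := by
        rw [smul_add, smul_smul, smul_smul]
        congr 2 <;> (simp only [r]; field_simp)

theorem ConvexOn.nonneg_add_of_mem_radialSlopes_neg (hg : ConvexOn ℝ D g) (hg0 : g 0 = 0)
    {v : E} {a b : F} (ha : a ∈ radialSlopes D g v) (hb : b ∈ radialSlopes D g (-v)) :
    0 ≤ a + b := by
  obtain ⟨c, ⟨r, -, rfl⟩, hc⟩ := hg.exists_mem_radialSlopes_add_le ha hb
  simpa [hg0] using hc

end RadialSlopes

section AlgebraicSubgradient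

variable {E F : Type*} [AddCommGroup E] [Module ℝ E]
  [AddCommGroup F] [PartialOrder F] [IsOrderedAddMonoid F] [Module ℝ F] [PosSMulMono ℝ F]

theorem ConvexOn.exists_linearMap_le_of_forall_exists_smul_mem
    (hF : ∀ S : Set F, S.Nonempty → BddAbove S → ∃ b, IsLUB S b)
    {D : Set E} {g : E → F} (hg : ConvexOn ℝ D g) (hg0 : g 0 = 0)
    (hD : ∀ v : E, ∃ t : ℝ, 0 < t ∧ t • v ∈ D) :
    ∃ T : E →ₗ[ℝ] F, ∀ u ∈ D, T u ≤ g u := by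
  have hglb : ∀ v, ∃ P, IsGLB (radialSlopes D g v) P := fun v => by
    obtain ⟨s, hs, hsv⟩ := hD v
    obtain ⟨t, ht, htv⟩ := hD (-v)
    refine exists_isGLB_of_exists_isLUB hF ⟨_, s, ⟨hs, hsv⟩, rfl⟩ ⟨-(t⁻¹ • g (t • -v)), ?_⟩
    intro a ha
    exact neg_le_iff_add_nonneg.2 (hg.nonneg_add_of_mem_radialSlopes_neg hg0 ha ⟨t, ⟨ht, htv⟩, rfl⟩)
  choose P hP using hglb
  have hP_add : ∀ v w, P (v + w) ≤ P v + P w := fun v w => by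
    refine ((hP v).add (hP w)).2 ?_
    rintro _ ⟨a, ha, b, hb, rfl⟩
    obtain ⟨c, hc, hcab⟩ := hg.exists_mem_radialSlopes_add_le ha hb
    exact ((hP (v + w)).1 hc).trans hcab
  have hP_smul : ∀ c : ℝ, 0 < c → ∀ v, P (c • v) = c • P v := fun c hc v => by
    refine (hP (c • v)).unique ?_
    rw [radialSlopes_smul hc]
    exact (OrderIso.smulRight hc).isGLB_image'.2 (hP v)
  obtain ⟨T, hT⟩ := exists_linearMap_le_sublinear hF P hP_add hP_smul
  exact ⟨T, fun u hu => (hT u).trans ((hP u).1 (apply_mem_radialSlopes hu))⟩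

theorem ConvexOn.exists_linearMap_subgradient
    (hF : ∀ S : Set F, S.Nonempty → BddAbove S → ∃ b, IsLUB S b)
    {C : Set E} {Φ : E → F} (hΦ : ConvexOn ℝ C Φ) {x₀ : E}
    (hcore : ∀ v : E, ∃ t : ℝ, 0 < t ∧ x₀ + t • v ∈ C) :
    ∃ T : E →ₗ[ℝ] F, ∀ x ∈ C, Φ x₀ + T (x - x₀) ≤ Φ x := by
  have hg : ConvexOn ℝ ((x₀ + ·) ⁻¹' C) fun u => Φ (x₀ + u) + -Φ x₀ :=
    (hΦ.translate_right x₀).add_const (-Φ x₀)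
  obtain ⟨T, hT⟩ := hg.exists_linearMap_le_of_forall_exists_smul_mem hF (by simp) hcore
  refine ⟨T, fun x hx => ?_⟩
  simpa [← sub_eq_add_neg, le_sub_iff_add_le'] using hT (x - x₀) (by simpa using hx)

end AlgebraicSubgradient

theorem exists_pos_add_smul_mem {E : Type*} [AddCommGroup E] [Module ℝ E] [TopologicalSpace E]
    [ContinuousAdd E] [ContinuousSMul ℝ E] {U : Set E} {x₀ : E} (hU : U ∈ 𝓝 x₀) (v : E) :
    ∃ t : ℝ, 0 < t ∧ x₀ + t • v ∈ U := by
  have : Tendsto (fun t : ℝ => x₀ + t • v) (𝓝 0) (𝓝 x₀) := by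
    simpa using tendsto_const_nhds.add ((tendsto_id (x := 𝓝 (0 : ℝ))).smul_const v)
  exact (this.eventually_mem hU).exists_gt

theorem norm_le_norm_add_norm_of_le_of_neg_le {F : Type*} [NormedAddCommGroup F] [Lattice F]
    [HasSolidNorm F] [IsOrderedAddMonoid F] {a b c : F} (hab : a ≤ b) (hac : -a ≤ c) :
    ‖a‖ ≤ ‖b‖ + ‖c‖ := by
  have habs : |a| ≤ |(|b| + |c|)| := by
    rw [abs_of_nonneg (add_nonneg (abs_nonneg b) (abs_nonneg c)), abs_le']
    exact ⟨hab.trans ((le_abs_self b).trans (le_add_of_nonneg_right (abs_nonneg c))),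
      hac.trans ((le_abs_self c).trans (le_add_of_nonneg_left (abs_nonneg b)))⟩
  calc ‖a‖ ≤ ‖|b| + |c|‖ := norm_le_norm_of_abs_le_abs habs
    _ ≤ ‖|b|‖ + ‖|c|‖ := norm_add_le _ _
    _ = ‖b‖ + ‖c‖ := by rw [norm_abs_eq_norm, norm_abs_eq_norm]

theorem AddMonoidHom.continuous_of_eventually_le {E F : Type*} [AddCommGroup E] [TopologicalSpace E]
    [IsTopologicalAddGroup E] [NormedAddCommGroup F] [Lattice F] [HasSolidNorm F]
    [IsOrderedAddMonoid F] (T : E →+ F) {g : E → F} (hle : ∀ᶠ u in 𝓝 0, T u ≤ g u)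
    (hg : Tendsto g (𝓝 0) (𝓝 0)) : Continuous T := by
  have hneg : Tendsto (fun u : E => -u) (𝓝 0) (𝓝 0) := by simpa using tendsto_neg (0 : E)
  have hle_neg : ∀ᶠ u in 𝓝 0, -T u ≤ g (-u) := by
    simpa using hneg.eventually hle
  refine continuous_of_continuousAt_zero T ?_
  rw [ContinuousAt, map_zero]
  refine squeeze_zero_norm' ((hle.and hle_neg).mono fun u hu =>
    norm_le_norm_add_norm_of_le_of_neg_le hu.1 hu.2) ?_
  simpa using hg.norm.add (hg.comp hneg).norm

theorem LinearMap.apply_nonneg_of_subgradient_nhds {E F : Type*} [AddCommGroup E]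
    [PartialOrder E] [IsOrderedAddMonoid E] [Module ℝ E] [PosSMulMono ℝ E] [TopologicalSpace E]
    [ContinuousAdd E] [ContinuousSMul ℝ E]
    [AddCommGroup F] [PartialOrder F] [IsOrderedAddMonoid F] [Module ℝ F] [PosSMulMono ℝ F]
    {Φ : E → F} {T : E →ₗ[ℝ] F} {U : Set E} {x₀ : E} (hU : U ∈ 𝓝 x₀)
    (hT : ∀ x ∈ U, Φ x₀ + T (x - x₀) ≤ Φ x) (hΦ : ∀ x ∈ U, x ≤ x₀ → Φ x ≤ Φ x₀)
    {x : E} (hx : 0 ≤ x) : 0 ≤ T x := by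
  obtain ⟨t, ht, hmem⟩ := exists_pos_add_smul_mem hU (-x)
  have hle : x₀ + t • -x ≤ x₀ := by
    simpa [smul_neg, ← sub_eq_add_neg] using smul_nonneg ht.le hx
  have hTtx := (hT _ hmem).trans (hΦ _ hmem hle)
  simp only [add_sub_cancel_left, map_smul, map_neg, smul_neg, add_le_iff_nonpos_right,
    neg_nonpos] at hTtx
  exact (smul_nonneg_iff_nonneg_of_pos_left ht).1 hTtx

theorem LinearMap.continuous_of_subgradient {E F : Type*} [AddCommGroup E] [Module ℝ E]
    [TopologicalSpace E] [IsTopologicalAddGroup E] [NormedAddCommGroup F] [Lattice F]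
    [HasSolidNorm F] [IsOrderedAddMonoid F] [Module ℝ F]
    {Φ : E → F} {T : E →ₗ[ℝ] F} {C : Set E} {x₀ : E} (hC : C ∈ 𝓝 x₀)
    (hT : ∀ x ∈ C, Φ x₀ + T (x - x₀) ≤ Φ x) (hΦ : ContinuousAt Φ x₀) : Continuous T := by
  have htrans : Tendsto (fun u : E => x₀ + u) (𝓝 0) (𝓝 x₀) := by
    simpa using tendsto_const_nhds.add (tendsto_id (x := 𝓝 (0 : E)))
  refine T.toAddMonoidHom.continuous_of_eventually_le (g := fun u => Φ (x₀ + u) - Φ x₀) ?_ ?_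
  · filter_upwards [htrans.eventually_mem hC] with u hu
    simpa [le_sub_iff_add_le'] using hT _ hu
  · simpa using (hΦ.tendsto.comp htrans).sub_const (Φ x₀)

theorem isotone_on_interior_iff_positive_subgradient_general
    {E F : Type*}
    [NormedAddCommGroup E] [NormedSpace ℝ E]
    [PartialOrder E] [CovariantClass E E (· + ·) (· ≤ ·)]
    (hsmulE : ∀ (c : ℝ) (x : E), 0 ≤ c → 0 ≤ x → 0 ≤ c • x)
    [NormedAddCommGroup F] [Lattice F] [HasSolidNorm F] [IsOrderedAddMonoid F]
    [NormedSpace ℝ F]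
    (hsmulF : ∀ (c : ℝ) (x : F), 0 ≤ c → 0 ≤ x → 0 ≤ c • x)
    (hcompF : ∀ S : Set F, S.Nonempty → BddAbove S → ∃ b, IsLUB S b)
    (Φ : E → F)
    (hconv : ∀ x y : E, 0 ≤ x → 0 ≤ y → ∀ t : ℝ, 0 ≤ t → t ≤ 1 →
      Φ ((1 - t) • x + t • y) ≤ (1 - t) • Φ x + t • Φ y)
    (hcont : ContinuousOn Φ {x : E | 0 ≤ x}) :
    (∀ x y : E, x ∈ interior {x : E | 0 ≤ x} → y ∈ interior {x : E | 0 ≤ x} →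
        x ≤ y → Φ x ≤ Φ y) ↔
      ∀ x₀ ∈ interior {x : E | 0 ≤ x}, ∃ T : E →L[ℝ] F,
        (∀ x : E, 0 ≤ x → 0 ≤ T x) ∧ ∀ x : E, 0 ≤ x → Φ x₀ + T (x - x₀) ≤ Φ x := by
  have : IsOrderedAddMonoid E := { add_le_add_left := fun _ _ h c => add_le_add_left h c }
  have : PosSMulMono ℝ E := .of_smul_nonneg fun c hc x hx => hsmulE c x hc hx
  have : PosSMulMono ℝ F := .of_smul_nonneg fun c hc x hx => hsmulF c x hc hx
  have hΦ : ConvexOn ℝ {x : E | 0 ≤ x} Φ := ⟨convex_Ici 0, fun x hx y hy a b _ hb hab => by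
    obtain rfl : a = 1 - b := eq_sub_of_add_eq hab
    exact hconv x y hx hy b hb (by linarith)⟩
  constructor
  · intro hiso x₀ hx₀
    have hC : {x : E | 0 ≤ x} ∈ 𝓝 x₀ := mem_interior_iff_mem_nhds.1 hx₀
    obtain ⟨T, hT⟩ := hΦ.exists_linearMap_subgradient hcompF (exists_pos_add_smul_mem hC)
    refine ⟨⟨T, T.continuous_of_subgradient hC hT (hcont.continuousAt hC)⟩,
      fun x hx => T.apply_nonneg_of_subgradient_nhds (isOpen_interior.mem_nhds hx₀)
        (fun x hx => hT x (interior_subset hx)) (fun x hx hle => hiso x x₀ hx hx₀ hle) hx, hT⟩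
  · intro hsub x y hx hy hxy
    obtain ⟨T, hT_nonneg, hT⟩ := hsub x hx
    calc Φ x ≤ Φ x + T (y - x) := le_add_of_nonneg_right (hT_nonneg _ (sub_nonneg.2 hxy))
      _ ≤ Φ y := hT y (interior_subset hy)

/-- (Theorem 5) Let `E` be an ordered Banach space whose positive cone
has nonempty interior, `F` an order complete Banach lattice and `Φ : E₊ → F` continuous
and convex. Then `Φ` is isotone on `int E₊` iff at every point of `int E₊` the
subdifferential of `Φ` contains a positive linear operator. -/
theorem isotone_on_interior_iff_positive_subgradient
    {E F : Type*}
    [NormedAddCommGroup E] [NormedSpace ℝ E] [CompleteSpace E]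
    [PartialOrder E] [CovariantClass E E (· + ·) (· ≤ ·)]
    (hsmulE : ∀ (c : ℝ) (x : E), 0 ≤ c → 0 ≤ x → 0 ≤ c • x)
    (hclosedE : IsClosed {x : E | 0 ≤ x})
    (hgenE : ∀ x : E, ∃ u v : E, 0 ≤ u ∧ 0 ≤ v ∧ x = u - v)
    (hmonoE : ∀ x y : E, 0 ≤ x → x ≤ y → ‖x‖ ≤ ‖y‖)
    (hint : (interior {x : E | 0 ≤ x}).Nonempty)
    [NormedAddCommGroup F] [Lattice F] [HasSolidNorm F] [IsOrderedAddMonoid F]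
    [NormedSpace ℝ F] [CompleteSpace F]
    (hsmulF : ∀ (c : ℝ) (x : F), 0 ≤ c → 0 ≤ x → 0 ≤ c • x)
    (hcompF : ∀ S : Set F, S.Nonempty → BddAbove S → ∃ b, IsLUB S b)
    (Φ : E → F)
    (hconv : ∀ x y : E, 0 ≤ x → 0 ≤ y → ∀ t : ℝ, 0 ≤ t → t ≤ 1 →
      Φ ((1 - t) • x + t • y) ≤ (1 - t) • Φ x + t • Φ y)
    (hcont : ContinuousOn Φ {x : E | 0 ≤ x}) :
    (∀ x y : E, x ∈ interior {x : E | 0 ≤ x} → y ∈ interior {x : E | 0 ≤ x} →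
        x ≤ y → Φ x ≤ Φ y) ↔
      ∀ x₀ ∈ interior {x : E | 0 ≤ x}, ∃ T : E →L[ℝ] F,
        (∀ x : E, 0 ≤ x → 0 ≤ T x) ∧ ∀ x : E, 0 ≤ x → Φ x₀ + T (x - x₀) ≤ Φ x :=
  isotone_on_interior_iff_positive_subgradient_general hsmulE hsmulF hcompF Φ hconv hcont
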